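/- arXiv:2210.12122 — 4 statements merged into one kernel-verified Lean document; each statement's English description precedes it below -/
import Mathlib

section
/- Fix p₁, p₂, p₃ ∈ (0,1) and an integer r ≥ 1, and let f_{r,p}(k) = C(k+r−1, k) (1−p)^r p^k denote the probability mass function of the negative binomial distribution with parameters r and p. Then Σ_{k=0}^∞ f_{r,p₁}(k) f_{r,p₂}(k) f_{r,p₃}(k) = ( ∏_{i=1}^3 (1−p_i)^r / (1 − p₁p₂p₃)^r ) · Σ_{k=0}^{r−1} C(r−1, k) · 2^{−2k} · ( Γ(2k+r) / (Γ(r)Γ(k+1)²) ) · ( 4p₁p₂p₃ / (1 − p₁p₂p₃)² )^k. -/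
noncomputable def nbF (n k j : ℕ) : ℝ :=
  (n.choose j : ℝ) * ((2*j+n).choose j : ℝ) * ((j+n).choose j : ℝ) *
    ((k+n+j).choose (2*j+n) : ℝ)

noncomputable def nbG (n k : ℕ) : ℕ → ℝ
  | 0 => 0
  | j+1 => -(2*(k:ℝ)+n+2) * ((n:ℝ)-(j:ℝ)) * ((k:ℝ)+n+j+1) *
      ((n.choose j : ℝ) * ((2*j+n).choose j : ℝ) * ((j+n).choose j : ℝ) *
        ((k+n+j).choose (2*j+n) : ℝ))


lemma nb_local (n k j : ℕ) :
    ((k:ℝ)+1)^3 * nbF n (k+1) j - ((k:ℝ)+(n:ℝ)+1)^3 * nbF n k j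
      = nbG n k (j+1) - nbG n k j := by
  match j with
  | 0 =>
      have hx : ((k+n).choose n : ℝ) * ((k:ℝ)+n+1) = ((k+n+1).choose n : ℝ) * ((k:ℝ)+1) := by
        have h := Nat.choose_mul_succ_eq (k+n) n
        have h2 : k + n + 1 - n = k + 1 := by omega
        rw [h2] at h
        exact_mod_cast h
      simp only [nbF, nbG, Nat.choose_zero_right, Nat.cast_one, Nat.mul_zero, Nat.zero_add,
        Nat.add_zero, Nat.cast_zero, mul_one, one_mul, sub_zero]
      rw [show k+1+n = k+n+1 from by omega]
      push_cast
      linear_combination -((k:ℝ)+1)^2 * hx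
  | j+1 =>
      simp only [nbF, nbG]
      rw [show 2*(j+1)+n = 2*j+n+2 from by omega, show (j+1)+n = j+n+1 from by omega,
        show k+n+(j+1) = k+n+j+1 from by omega, show k+1+n+(j+1) = k+n+j+2 from by omega]
      rcases lt_or_ge k j with hjk | hjk
      · -- j > k : all k-dependent chooses vanish
        rw [Nat.choose_eq_zero_of_lt (show k+n+j+1 < 2*j+n+2 by omega),
          Nat.choose_eq_zero_of_lt (show k+n+j+2 < 2*j+n+2 by omega),
          Nat.choose_eq_zero_of_lt (show k+n+j < 2*j+n by omega)]
        push_cast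
        ring
      · rcases lt_trichotomy n j with hnj | hnj | hnj
        · -- j > n
          rw [Nat.choose_eq_zero_of_lt (show n < j+1 by omega),
            Nat.choose_eq_zero_of_lt (show n < j by omega)]
          push_cast
          ring
        · -- j = n
          subst hnj
          rw [Nat.choose_succ_self]
          push_cast
          ring
        · -- j < n
          have h1 : ((n.choose (j+1) : ℕ) : ℝ) * ((j:ℝ)+1)
              = (n.choose j : ℝ) * ((n:ℝ)-(j:ℝ)) := by
            rw [← Nat.cast_sub hnj.le]
            exact_mod_cast Nat.choose_succ_right_eq n j
          have h2 : (((2*j+n+2).choose (j+1) : ℕ) : ℝ) * (((j:ℝ)+1)*((n:ℝ)+j+1))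
              = (2*(j:ℝ)+n+1)*(2*(j:ℝ)+n+2) * ((2*j+n).choose j : ℝ) := by
            have a := Nat.add_one_mul_choose_eq (2*j+n) j
            have b := Nat.choose_mul_succ_eq (2*j+n+1) (j+1)
            rw [show 2*j+n+1+1 - (j+1) = n+j+1 from by omega] at b
            have a' : (2*(j:ℝ)+n+1) * ((2*j+n).choose j : ℝ)
                = ((2*j+n+1).choose (j+1) : ℝ) * ((j:ℝ)+1) := by exact_mod_cast a
            have b' : ((2*j+n+1).choose (j+1) : ℝ) * (2*(j:ℝ)+n+2)
                = ((2*j+n+2).choose (j+1) : ℝ) * ((n:ℝ)+j+1) := by exact_mod_cast b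
            linear_combination (-((j:ℝ)+1))*b' - (2*(j:ℝ)+n+2)*a'
          have h3 : (((j+n+1).choose (j+1) : ℕ) : ℝ) * ((j:ℝ)+1)
              = ((n:ℝ)+j+1) * ((j+n).choose j : ℝ) := by
            have a := Nat.add_one_mul_choose_eq (j+n) j
            have a' : ((j:ℝ)+n+1) * ((j+n).choose j : ℝ)
                = ((j+n+1).choose (j+1) : ℝ) * ((j:ℝ)+1) := by exact_mod_cast a
            linear_combination -a'
          rcases eq_or_lt_of_le hjk with hke | hke
          · -- j = k
            subst hke
            rw [Nat.choose_eq_zero_of_lt (show j+n+j+1 < 2*j+n+2 by omega),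
              show j+n+j+2 = 2*j+n+2 from by omega, Nat.choose_self,
              show j+n+j = 2*j+n from by omega, Nat.choose_self]
            push_cast
            have hS : (((j:ℝ)+1)^3*((n:ℝ)+j+1)) ≠ 0 := by positivity
            refine mul_left_cancel₀ hS ?_
            linear_combination
              (((j:ℝ)+1)^3*(((2*j+n+2).choose (j+1):ℝ))*(((j+n+1).choose (j+1):ℝ))*((j:ℝ)+1)^2*((n:ℝ)+j+1)) * h1 +
              (((j:ℝ)+1)^3*((j:ℝ)+1)*((n:ℝ)-(j:ℝ))*((n.choose j:ℝ))*(((j+n+1).choose (j+1):ℝ))) * h2 +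
              (((j:ℝ)+1)^3*((n:ℝ)-(j:ℝ))*((n.choose j:ℝ))*(((2*j+n).choose j:ℝ))*(2*(j:ℝ)+n+1)*(2*(j:ℝ)+n+2)) * h3
          · -- j < k : main case
            have h4 : (((k+n+j+1).choose (2*j+n+2) : ℕ) : ℝ) * ((2*(j:ℝ)+n+1)*(2*(j:ℝ)+n+2))
                = ((k:ℝ)-(j:ℝ)) * (((k:ℝ)+n+j+1) * ((k+n+j).choose (2*j+n) : ℝ)) := by
              have a := Nat.add_one_mul_choose_eq (k+n+j) (2*j+n)
              have b := Nat.choose_succ_right_eq (k+n+j+1) (2*j+n+1)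
              rw [show k+n+j+1 - (2*j+n+1) = k - j from by omega] at b
              have a' : ((k:ℝ)+n+j+1) * ((k+n+j).choose (2*j+n) : ℝ)
                  = ((k+n+j+1).choose (2*j+n+1) : ℝ) * (2*(j:ℝ)+n+1) := by exact_mod_cast a
              have b' : ((k+n+j+1).choose (2*j+n+2) : ℝ) * (2*(j:ℝ)+n+2)
                  = ((k+n+j+1).choose (2*j+n+1) : ℝ) * ((k:ℝ)-(j:ℝ)) := by
                rw [← Nat.cast_sub hke.le, show (2*j+n+2) = (2*j+n+1)+1 from by omega]
                exact_mod_cast b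
              linear_combination (2*(j:ℝ)+n+1)*b' - ((k:ℝ)-(j:ℝ))*a'
            have h5 : (((k+n+j+1).choose (2*j+n+2) : ℕ) : ℝ) * ((k:ℝ)+n+j+2)
                = ((k+n+j+2).choose (2*j+n+2) : ℝ) * ((k:ℝ)-(j:ℝ)) := by
              have b := Nat.choose_mul_succ_eq (k+n+j+1) (2*j+n+2)
              rw [show k+n+j+1+1 - (2*j+n+2) = k - j from by omega] at b
              rw [← Nat.cast_sub hke.le, show k+n+j+2 = k+n+j+1+1 from by omega]
              exact_mod_cast b
            push_cast
            have hkj : (0:ℝ) < (k:ℝ)-(j:ℝ) := by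
              have : (j:ℝ) < (k:ℝ) := by exact_mod_cast hke
              linarith
            have hS : (((k:ℝ)-(j:ℝ))*((2*(j:ℝ)+n+1)*(2*(j:ℝ)+n+2)*(((j:ℝ)+1)^3*((n:ℝ)+j+1)))) ≠ 0 := by
              have : (0:ℝ) < (2*(j:ℝ)+n+1)*(2*(j:ℝ)+n+2)*(((j:ℝ)+1)^3*((n:ℝ)+j+1)) := by positivity
              exact ne_of_gt (by nlinarith)
            refine mul_left_cancel₀ hS ?_
            set x1 : ℝ := (n.choose (j+1) : ℝ)
            set x2 : ℝ := ((2*j+n+2).choose (j+1) : ℝ)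
            set x3 : ℝ := ((j+n+1).choose (j+1) : ℝ)
            set y1 : ℝ := (n.choose j : ℝ)
            set y2 : ℝ := ((2*j+n).choose j : ℝ)
            set y3 : ℝ := ((j+n).choose j : ℝ)
            set Y : ℝ := ((k+n+j+1).choose (2*j+n+2) : ℝ)
            set Y' : ℝ := ((k+n+j+2).choose (2*j+n+2) : ℝ)
            set Z0 : ℝ := ((k+n+j).choose (2*j+n) : ℝ)
            set C1 : ℝ := ((k:ℝ)+1)^3*((k:ℝ)+n+j+2) - ((k:ℝ)-(j:ℝ))*((k:ℝ)+n+1)^3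
              + ((k:ℝ)-(j:ℝ))*(2*(k:ℝ)+n+2)*((n:ℝ)-(j:ℝ)-1)*((k:ℝ)+n+j+2) with hC1
            set Q : ℝ := C1*((k:ℝ)-(j:ℝ))*Z0*((k:ℝ)+n+j+1) with hQ
            linear_combination
              (Q*x2*x3*((j:ℝ)+1)^2*((n:ℝ)+j+1)) * h1 +
              (Q*((j:ℝ)+1)*((n:ℝ)-(j:ℝ))*y1*x3) * h2 +
              (Q*((n:ℝ)-(j:ℝ))*y1*y2*(2*(j:ℝ)+n+1)*(2*(j:ℝ)+n+2)) * h3 +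
              (((j:ℝ)+1)^3*((n:ℝ)+j+1)*C1*x1*x2*x3) * h4 +
              (-(2*(j:ℝ)+n+1)*(2*(j:ℝ)+n+2)*((j:ℝ)+1)^3*((n:ℝ)+j+1)*((k:ℝ)+1)^3*x1*x2*x3) * h5

lemma nb_key (n k : ℕ) :
    (((k+n).choose n : ℕ) : ℝ)^3 = ∑ j ∈ Finset.range (n+1), nbF n k j := by
  induction k with
  | zero =>
    rw [Finset.sum_eq_single 0]
    · simp [nbF]
    · intro j _ hj
      have : n + j < 2*j + n := by omega
      simp [nbF, show (0:ℕ)+n+j = n+j from by omega, Nat.choose_eq_zero_of_lt this]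
    · intro h; exact absurd (Finset.mem_range.2 (by omega)) h
  | succ k ih =>
    have hsum : ((k:ℝ)+1)^3 * (∑ j ∈ Finset.range (n+1), nbF n (k+1) j)
        - ((k:ℝ)+(n:ℝ)+1)^3 * (∑ j ∈ Finset.range (n+1), nbF n k j) = 0 := by
      rw [Finset.mul_sum, Finset.mul_sum, ← Finset.sum_sub_distrib]
      rw [Finset.sum_congr rfl (fun j _ => nb_local n k j), Finset.sum_range_sub (nbG n k)]
      simp [nbG]
    have hx : ((k+n).choose n : ℝ) * ((k:ℝ)+(n:ℝ)+1) = ((k+n+1).choose n : ℝ) * ((k:ℝ)+1) := by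
      have h := Nat.choose_mul_succ_eq (k+n) n
      have h2 : k + n + 1 - n = k + 1 := by omega
      rw [h2] at h
      exact_mod_cast h
    have hk1 : ((k:ℝ)+1)^3 ≠ 0 := by positivity
    refine mul_left_cancel₀ hk1 ?_
    rw [show k+1+n = k+n+1 from by omega]
    have key2 : ((k:ℝ)+1)^3 * (((k+n+1).choose n : ℝ))^3
        = ((k:ℝ)+(n:ℝ)+1)^3 * (((k+n).choose n : ℝ))^3 := by
      linear_combination -((((k:ℝ)+1)*((k+n+1).choose n : ℝ))^2
        + ((k:ℝ)+1)*((k+n+1).choose n : ℝ)*((k:ℝ)+(n:ℝ)+1)*((k+n).choose n : ℝ)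
        + (((k:ℝ)+(n:ℝ)+1)*((k+n).choose n : ℝ))^2) * hx
    linear_combination key2 + ((k:ℝ)+(n:ℝ)+1)^3 * ih - hsum

/-- PMF of the negative binomial distribution with parameters `r, p` on the
nonnegative integers. -/
noncomputable def negBinomPMF (r : ℕ) (p : ℝ) (k : ℕ) : ℝ :=
  (Nat.choose (k + r - 1) k : ℝ) * (1 - p) ^ r * p ^ k

/-- Closed form for the expectation over `k ~ NegBinomial(r, p₁)` of
`f_{r,p₂}(k) · f_{r,p₃}(k)`. -/
theorem stmt_4 (r : ℕ) (hr : 1 ≤ r) (p₁ p₂ p₃ : ℝ) (h₁ : p₁ ∈ Set.Ioo (0 : ℝ) 1)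
    (h₂ : p₂ ∈ Set.Ioo (0 : ℝ) 1) (h₃ : p₃ ∈ Set.Ioo (0 : ℝ) 1) :
    ∑' k : ℕ, negBinomPMF r p₁ k * negBinomPMF r p₂ k * negBinomPMF r p₃ k =
      ((1 - p₁) ^ r * (1 - p₂) ^ r * (1 - p₃) ^ r / (1 - p₁ * p₂ * p₃) ^ r) *
        ∑ k ∈ Finset.range r,
          (Nat.choose (r - 1) k : ℝ) * (2 : ℝ) ^ (-(2 * k : ℤ)) *
            (Real.Gamma (2 * k + r) / (Real.Gamma r * Real.Gamma (k + 1) ^ 2)) *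
            (4 * (p₁ * p₂ * p₃) / (1 - p₁ * p₂ * p₃) ^ 2) ^ k := by
  obtain ⟨n, rfl⟩ : ∃ n, r = n + 1 := ⟨r - 1, by omega⟩
  obtain ⟨hp1, hp1'⟩ := h₁
  obtain ⟨hp2, hp2'⟩ := h₂
  obtain ⟨hp3, hp3'⟩ := h₃
  set q : ℝ := p₁ * p₂ * p₃ with hqdef
  have hq0 : 0 < q := by positivity
  have h12 : p₁ * p₂ < 1 := by nlinarith
  have hq1 : q < 1 := by rw [hqdef]; nlinarith [mul_pos hp1 hp2]
  have h1q : (0:ℝ) < 1 - q := by linarith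
  have hqn : ‖q‖ < 1 := by rw [Real.norm_eq_abs]; exact abs_lt.2 ⟨by linarith, hq1⟩
  set P : ℝ := (1 - p₁)^(n+1) * (1 - p₂)^(n+1) * (1 - p₃)^(n+1) with hPdef
  -- rewrite each summand as a finite sum
  have hterm : ∀ k : ℕ, negBinomPMF (n+1) p₁ k * negBinomPMF (n+1) p₂ k * negBinomPMF (n+1) p₃ k
      = ∑ j ∈ Finset.range (n+1),
          (P * ((n.choose j : ℝ) * ((2*j+n).choose j : ℝ) * ((j+n).choose j : ℝ)))
            * (((k+n+j).choose (2*j+n) : ℝ) * q^k) := by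
    intro k
    have e1 : k + (n+1) - 1 = k + n := by omega
    have e2 : ((k+n).choose k : ℝ) = ((k+n).choose n : ℝ) := by
      have := Nat.choose_symm (show k ≤ k + n by omega)
      rw [show k + n - k = n from by omega] at this
      exact_mod_cast this.symm
    simp only [negBinomPMF, e1, e2]
    have : (((k+n).choose n : ℕ) : ℝ)^3 * (P * q^k)
        = ∑ j ∈ Finset.range (n+1),
          (P * ((n.choose j : ℝ) * ((2*j+n).choose j : ℝ) * ((j+n).choose j : ℝ)))
            * (((k+n+j).choose (2*j+n) : ℝ) * q^k) := by
      rw [nb_key, Finset.sum_mul]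
      exact Finset.sum_congr rfl fun j _ => by simp only [nbF]; ring
    rw [← this, hPdef, hqdef]
    ring
  -- summability of each piece
  have hs : ∀ j : ℕ, Summable (fun k : ℕ => ((k+n+j).choose (2*j+n) : ℝ) * q^k) := by
    intro j
    have base : Summable (fun k : ℕ => ((k + (2*j+n)).choose (2*j+n) : ℝ) * q^k) :=
      summable_choose_mul_geometric_of_norm_lt_one _ hqn
    have base' : Summable (fun k : ℕ => (((k + (2*j+n)).choose (2*j+n) : ℝ) * q^k) * q^j) :=
      base.mul_right _
    refine (summable_nat_add_iff j).mp ?_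
    refine base'.congr fun k => ?_
    rw [show k + j + n + j = k + (2*j+n) from by omega, pow_add]
    ring
  -- value of each inner tsum
  have hv : ∀ j : ℕ, ∑' k : ℕ, ((k+n+j).choose (2*j+n) : ℝ) * q^k
      = q^j / (1-q)^(2*j+n+1) := by
    intro j
    rw [← Summable.sum_add_tsum_nat_add j (hs j)]
    have hz : ∑ i ∈ Finset.range j, ((i+n+j).choose (2*j+n) : ℝ) * q^i = 0 := by
      refine Finset.sum_eq_zero fun i hi => ?_
      rw [Finset.mem_range] at hi
      rw [Nat.choose_eq_zero_of_lt (show i+n+j < 2*j+n by omega)]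
      simp
    rw [hz, zero_add]
    have : ∀ k : ℕ, ((k+j+n+j).choose (2*j+n) : ℝ) * q^(k+j)
        = (((k + (2*j+n)).choose (2*j+n) : ℝ) * q^k) * q^j := by
      intro k
      rw [show k + j + n + j = k + (2*j+n) from by omega, pow_add]
      ring
    rw [tsum_congr this, tsum_mul_right, tsum_choose_mul_geometric_of_norm_lt_one _ hqn]
    rw [show 2*j+n+1 = (2*j+n)+1 from rfl]
    ring
  have main : ∑' k : ℕ, negBinomPMF (n+1) p₁ k * negBinomPMF (n+1) p₂ k * negBinomPMF (n+1) p₃ k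
      = ∑ j ∈ Finset.range (n+1),
          (P * ((n.choose j : ℝ) * ((2*j+n).choose j : ℝ) * ((j+n).choose j : ℝ)))
            * (q^j / (1-q)^(2*j+n+1)) := by
    rw [tsum_congr hterm, Summable.tsum_finsetSum (fun j _ => ((hs j).mul_left _))]
    exact Finset.sum_congr rfl fun j _ => by rw [tsum_mul_left, hv j]
  rw [main, Finset.mul_sum]
  refine Finset.sum_congr rfl fun j hj => ?_
  rw [Finset.mem_range] at hj
  have g1 : Real.Gamma (2 * (j:ℝ) + ((n+1 : ℕ) : ℝ)) = ((2*j+n).factorial : ℝ) := by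
    rw [show 2 * (j:ℝ) + ((n+1 : ℕ) : ℝ) = ((2*j+n : ℕ) : ℝ) + 1 by push_cast; ring]
    exact Real.Gamma_nat_eq_factorial _
  have g2 : Real.Gamma (((n+1 : ℕ)) : ℝ) = (n.factorial : ℝ) := by
    rw [show (((n+1 : ℕ)) : ℝ) = ((n:ℕ) : ℝ) + 1 by push_cast; ring]
    exact Real.Gamma_nat_eq_factorial _
  have g3 : Real.Gamma ((j:ℝ) + 1) = (j.factorial : ℝ) := Real.Gamma_nat_eq_factorial _
  have f1 : (((2*j+n).choose j : ℕ) : ℝ) * (j.factorial : ℝ) * ((j+n).factorial : ℝ)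
      = ((2*j+n).factorial : ℝ) := by
    have h := Nat.choose_mul_factorial_mul_factorial (show j ≤ 2*j+n by omega)
    rw [show 2*j+n-j = j+n from by omega] at h
    exact_mod_cast h
  have f2 : (((j+n).choose j : ℕ) : ℝ) * (j.factorial : ℝ) * (n.factorial : ℝ)
      = ((j+n).factorial : ℝ) := by
    have h := Nat.choose_mul_factorial_mul_factorial (show j ≤ j+n by omega)
    rw [show j+n-j = n from by omega] at h
    exact_mod_cast h
  have hy : ((2*j+n).factorial : ℝ)
      = (((2*j+n).choose j : ℕ) : ℝ) * (((j+n).choose j : ℕ) : ℝ)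
        * ((n.factorial : ℝ) * (j.factorial : ℝ)^2) := by
    linear_combination -((((2*j+n).choose j : ℕ) : ℝ) * (j.factorial : ℝ)) * f2 - f1
  have z1 : (2:ℝ) ^ (-(2 * (j:ℕ) : ℤ)) = ((4:ℝ)^j)⁻¹ := by
    rw [zpow_neg, show ((2 * (j:ℕ) : ℤ)) = ((2*j : ℕ) : ℤ) by push_cast; ring,
      zpow_natCast, pow_mul]
    norm_num
  rw [show (n+1-1 : ℕ) = n from by omega, g1, g2, g3, z1, hy]
  have hne1 : ((1:ℝ) - q) ≠ 0 := ne_of_gt h1q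
  have hne2 : (n.factorial : ℝ) ≠ 0 := by positivity
  have hne3 : (j.factorial : ℝ) ≠ 0 := by positivity
  rw [div_pow, mul_pow, ← pow_mul, show (2*j+n+1) = (n+1) + 2*j from by omega, pow_add]
  field_simp
  ring
end

section
/- For every integer r ≥ 1 and every real z with 0 < z < 1, Σ_{k=0}^∞ C(k+r−1, k)³ z^k = (1−z)^{−r} · Σ_{k=0}^{r−1} ( 4z/(1−z)² )^k · C(r−1, k) · 2^{−2k} · Γ(2k+r) / ( Γ(r) Γ(k+1)² ). In particular, the series on the left converges. -/
/-!
With `r = m + 1`, the cube has the expansion, uniform in `n`,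
`C(n+m, n)³ = ∑_{k ≤ m} C(m,k) C(m+2k,m) C(2k,k) C(n+m+k, m+2k)`,
and each `∑ₙ C(n+m+k, m+2k) zⁿ` is a shifted negative binomial series with sum
`zᵏ / (1-z)^(m+2k+1)`; since `Γ(2k+r) / (Γ(r) Γ(k+1)²) = C(m+2k,m) C(2k,k)`, this is the claim.
The product of the last three binomials in the expansion is `C(n+m,m) C(n,k) C(m+n+k,k)`, so the
expansion amounts to `∑ₖ C(m,k) C(n,k) C(m+n+k,k) = C(m+n,m)²`. For that, expand
`C(m+n+k,k) = ∑ₜ C(m+n,t) C(k,t)` by Vandermonde, sum over `k` first (Vandermonde again), and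
finish with `∑ₜ C(m,t) C(n,t) = C(m+n,m)`.
-/

open Finset

namespace Nat

theorem sum_range_choose_mul_choose_add (a n t : ℕ) :
    ∑ j ∈ range (a + 1), a.choose j * n.choose (t + j) = (a + n).choose (a + t) := by
  rw [add_choose_eq, Finset.Nat.sum_antidiagonal_eq_sum_range_succ_mk,
    ← sum_subset (range_subset_range.2 (by omega : a + 1 ≤ (a + t).succ)),
    ← sum_range_reflect]
  · refine sum_congr rfl fun j hj => ?_
    rw [mem_range] at hj
    rw [show a + 1 - 1 - j = a - j by omega, choose_symm (by omega),
      show t + (a - j) = a + t - j by omega]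
  · intro j _ hj
    rw [mem_range, not_lt] at hj
    rw [choose_eq_zero_of_lt (by omega : a < j), zero_mul]

theorem sum_range_choose_mul_choose (a n : ℕ) :
    ∑ j ∈ range (a + 1), a.choose j * n.choose j = (a + n).choose a := by
  simpa using sum_range_choose_mul_choose_add a n 0

theorem sum_range_choose_mul_choose_mul_choose (t a n : ℕ) :
    ∑ k ∈ range (t + a + 1), (t + a).choose k * n.choose k * k.choose t
      = (t + a).choose t * (a + n).choose (a + t) := by
  rw [add_assoc, sum_range_add,
    sum_eq_zero fun k hk => by rw [choose_eq_zero_of_lt (mem_range.1 hk), mul_zero],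
    zero_add, ← sum_range_choose_mul_choose_add, mul_sum]
  refine sum_congr rfl fun j _ => ?_
  rw [mul_right_comm, choose_mul (le_add_right t j), add_tsub_cancel_left, add_tsub_cancel_left]
  ring

theorem choose_mul_choose_add_choose (t a n : ℕ) :
    (t + a + n).choose t * (a + n).choose (a + t) = (t + a + n).choose (t + a) * n.choose t := by
  rcases lt_or_ge n t with hnt | htn
  · rw [choose_eq_zero_of_lt (by omega : a + n < a + t), choose_eq_zero_of_lt hnt, mul_zero, mul_zero]
  obtain ⟨b, rfl⟩ := exists_add_of_le htn
  -- both sides are the multinomial coefficient `(2t+a+b)! / (t! (t+a)! b!)`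
  qify
  rw [cast_choose ℚ (by omega : t ≤ t + a + (t + b)), cast_choose ℚ (by omega : a + t ≤ a + (t + b)),
    cast_choose ℚ (by omega : t + a ≤ t + a + (t + b)), cast_choose ℚ (le_add_right t b),
    show t + a + (t + b) - t = a + (t + b) by omega, show a + (t + b) - (a + t) = b by omega,
    show t + a + (t + b) - (t + a) = t + b by omega, add_tsub_cancel_left, add_comm a t]
  field_simp

theorem sum_range_choose_mul_choose_mul_add_choose (m n : ℕ) :
    ∑ k ∈ range (m + 1), m.choose k * n.choose k * (m + n + k).choose k
      = (m + n).choose m ^ 2 := by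
  have expand : ∀ k ∈ range (m + 1), m.choose k * n.choose k * (m + n + k).choose k
      = ∑ t ∈ range (m + 1), (m + n).choose t * (m.choose k * n.choose k * k.choose t) := by
    intro k hk
    rw [add_comm (m + n), ← sum_range_choose_mul_choose, mul_sum,
      sum_subset (range_subset_range.2 (mem_range.1 hk))]
    · exact sum_congr rfl fun t _ => by ring
    · intro t _ ht
      rw [mem_range, not_lt] at ht
      simp [choose_eq_zero_of_lt ht]
  have inner : ∀ t ∈ range (m + 1),
      ∑ k ∈ range (m + 1), (m + n).choose t * (m.choose k * n.choose k * k.choose t)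
        = (m + n).choose m * (m.choose t * n.choose t) := by
    intro t ht
    obtain ⟨a, rfl⟩ := exists_add_of_le (Nat.lt_succ_iff.1 (mem_range.1 ht))
    rw [← mul_sum, sum_range_choose_mul_choose_mul_choose, mul_left_comm,
      choose_mul_choose_add_choose]
    ring
  rw [sum_congr rfl expand, sum_comm, sum_congr rfl inner, ← mul_sum,
    sum_range_choose_mul_choose, sq]

theorem choose_mul_choose_mul_add_choose (m n k : ℕ) :
    (m + 2 * k).choose m * (2 * k).choose k * (n + (m + k)).choose (m + 2 * k)
      = (n + m).choose m * n.choose k * (m + n + k).choose k := by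
  rcases lt_or_ge n k with hnk | hkn
  · simp [choose_eq_zero_of_lt (by omega : n + (m + k) < m + 2 * k), choose_eq_zero_of_lt hnk]
  obtain ⟨b, rfl⟩ := exists_add_of_le hkn
  -- both sides are the multinomial coefficient `(m+2k+b)! / (m! k! k! b!)`
  qify
  rw [cast_choose ℚ (by omega : m ≤ m + 2 * k), cast_choose ℚ (by omega : k ≤ 2 * k),
    cast_choose ℚ (by omega : m + 2 * k ≤ k + b + (m + k)), cast_choose ℚ (by omega : m ≤ k + b + m),
    cast_choose ℚ (le_add_right k b), cast_choose ℚ (by omega : k ≤ m + (k + b) + k),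
    show m + 2 * k - m = 2 * k by omega, show 2 * k - k = k by omega,
    show k + b + (m + k) - (m + 2 * k) = b by omega, show k + b + m - m = k + b by omega,
    add_tsub_cancel_left, show m + (k + b) + k - k = k + b + m by omega,
    show m + (k + b) + k = k + b + (m + k) by omega]
  field_simp

theorem add_choose_pow_three (m n : ℕ) :
    (n + m).choose n ^ 3 = ∑ k ∈ range (m + 1),
      m.choose k * (m + 2 * k).choose m * (2 * k).choose k * (n + (m + k)).choose (m + 2 * k) := by
  calc (n + m).choose n ^ 3 = (n + m).choose m * (m + n).choose m ^ 2 := by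
        rw [choose_symm_add, add_comm m n]; ring
    _ = _ := by
      rw [← sum_range_choose_mul_choose_mul_add_choose, mul_sum]
      refine sum_congr rfl fun k _ => ?_
      linear_combination (m.choose k) * (choose_mul_choose_mul_add_choose m n k).symm

end Nat

section Geometric

variable {𝕜 : Type*} [NormedDivisionRing 𝕜] {z : 𝕜}

theorem hasSum_add_choose_add_mul_geometric_of_norm_lt_one (j k : ℕ) (hz : ‖z‖ < 1) :
    HasSum (fun n : ℕ => ((n + j).choose (j + k) : 𝕜) * z ^ n)
      (1 / (1 - z) ^ (j + k + 1) * z ^ k) := by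
  have vanish : ∀ n ∉ Set.range (· + k), ((n + j).choose (j + k) : 𝕜) * z ^ n = 0 := by
    intro n hn
    have hnk : n < k := by
      by_contra! h
      exact hn ⟨n - k, Nat.sub_add_cancel h⟩
    simp [Nat.choose_eq_zero_of_lt (by omega : n + j < j + k)]
  refine (Function.Injective.hasSum_iff (add_left_injective k) vanish).mp ?_
  have shift : (fun n : ℕ => ((n + j).choose (j + k) : 𝕜) * z ^ n) ∘ (· + k)
      = fun n => ((n + (j + k)).choose (j + k) : 𝕜) * z ^ n * z ^ k := by
    ext n
    rw [Function.comp_apply, pow_add, ← mul_assoc, add_right_comm, add_assoc]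
  rw [shift]
  exact (hasSum_choose_mul_geometric_of_norm_lt_one (j + k) hz).mul_right (z ^ k)

theorem hasSum_add_choose_pow_three_mul_geometric_of_norm_lt_one (m : ℕ) (hz : ‖z‖ < 1) :
    HasSum (fun n : ℕ => ((n + m).choose n : 𝕜) ^ 3 * z ^ n)
      (∑ k ∈ range (m + 1), (m.choose k * (m + 2 * k).choose m * (2 * k).choose k : ℕ) *
        (1 / (1 - z) ^ (m + 2 * k + 1) * z ^ k)) := by
  have term : ∀ k ∈ range (m + 1), HasSum
      (fun n : ℕ => ((m.choose k * (m + 2 * k).choose m * (2 * k).choose k : ℕ) : 𝕜) *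
        (((n + (m + k)).choose (m + 2 * k) : 𝕜) * z ^ n))
      ((m.choose k * (m + 2 * k).choose m * (2 * k).choose k : ℕ) *
        (1 / (1 - z) ^ (m + 2 * k + 1) * z ^ k)) := fun k _ => by
    simpa only [add_assoc m k k, ← two_mul] using
      (hasSum_add_choose_add_mul_geometric_of_norm_lt_one (m + k) k hz).mul_left
        ((m.choose k * (m + 2 * k).choose m * (2 * k).choose k : ℕ) : 𝕜)
  refine (hasSum_sum term).congr_fun fun n => ?_
  simp only [← mul_assoc, ← sum_mul]
  exact_mod_cast congrArg (fun x : ℕ => (x : 𝕜) * z ^ n) (Nat.add_choose_pow_three m n)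

end Geometric

theorem Real.Gamma_two_mul_add_div_Gamma_mul_Gamma_sq (m k : ℕ) :
    Real.Gamma (2 * k + (m + 1 : ℕ)) / (Real.Gamma (m + 1 : ℕ) * Real.Gamma (k + 1) ^ 2)
      = (m + 2 * k).choose m * (2 * k).choose k := by
  rw [show 2 * (k : ℝ) + (m + 1 : ℕ) = (m + 2 * k : ℕ) + 1 by push_cast; ring, Nat.cast_succ,
    Real.Gamma_nat_eq_factorial, Real.Gamma_nat_eq_factorial, Real.Gamma_nat_eq_factorial,
    Nat.cast_choose ℝ (Nat.le_add_right m _), Nat.cast_choose ℝ (by omega : k ≤ 2 * k),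
    add_tsub_cancel_left, show 2 * k - k = k by omega]
  field_simp

/-- Hypergeometric-type identity: for integer `r ≥ 1` and `0 < z < 1`,
`Σ_{k=0}^∞ C(k+r−1, k)³ z^k` converges and equals the stated finite sum. -/
theorem stmt_5 (r : ℕ) (hr : 1 ≤ r) (z : ℝ) (hz : z ∈ Set.Ioo (0 : ℝ) 1) :
    Summable (fun k : ℕ => (Nat.choose (k + r - 1) k : ℝ) ^ 3 * z ^ k) ∧
      ∑' k : ℕ, (Nat.choose (k + r - 1) k : ℝ) ^ 3 * z ^ k =
        (1 - z) ^ (-(r : ℤ)) *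
          ∑ k ∈ Finset.range r,
            (4 * z / (1 - z) ^ 2) ^ k * (Nat.choose (r - 1) k : ℝ) *
              (2 : ℝ) ^ (-(2 * k : ℤ)) *
              (Real.Gamma (2 * k + r) / (Real.Gamma r * Real.Gamma (k + 1) ^ 2)) := by
  obtain ⟨m, rfl⟩ : ∃ m, r = m + 1 := ⟨r - 1, by omega⟩
  have hz_norm : ‖z‖ < 1 := by rw [Real.norm_eq_abs, abs_of_pos hz.1]; exact hz.2
  have hsum := hasSum_add_choose_pow_three_mul_geometric_of_norm_lt_one m hz_norm
  simp only [← add_assoc, Nat.add_sub_cancel]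
  refine ⟨hsum.summable, hsum.tsum_eq.trans ?_⟩
  rw [mul_sum]
  refine sum_congr rfl fun k _ => ?_
  have hz1 : 1 - z ≠ 0 := sub_ne_zero.2 hz.2.ne'
  rw [Real.Gamma_two_mul_add_div_Gamma_mul_Gamma_sq, zpow_neg, zpow_neg, zpow_natCast,
    show (2 * k : ℤ) = (2 * k : ℕ) by push_cast; rfl, zpow_natCast, pow_mul]
  push_cast
  rw [div_pow, mul_pow, ← pow_mul, pow_add, pow_add]
  field_simp
  ring
end

section
/- Let U and V be random variables on a common probability space taking values in [0,1], let ρ₁, ρ₂ ≥ 0 satisfy ρ = ρ₁ + ρ₂ < 1, and let h satisfy 0 ≤ h < ρ/6. If E[U] ≥ (1 − ρ₁)e^{−2h} and E[V] ≥ (1 − ρ₂)e^{−2h}, then E[UV] ≥ (1 − 2ρ) e^{−4h}. -/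
open MeasureTheory

private lemma quad_ineq (ρ t : ℝ) (hρ0 : 0 < ρ) (hρ1 : ρ < 1) (ht1 : t ≤ 1)
    (hts : 1 - ρ / 3 ≤ t) : (1 - 2 * ρ) * (t * t) ≤ (2 - ρ) * t - 1 := by
  have hs0 : 0 ≤ 1 - t := by linarith
  have hsρ : 1 - t ≤ ρ / 3 := by linarith
  have hs13 : 1 - t ≤ 1 / 3 := by linarith
  have h2 : (2:ℝ) / 9 ≤ (1 - (1 - t)) * (1 - 2 * (1 - t)) := by nlinarith
  have h3 : ρ * (2 / 9) ≤ ρ * ((1 - (1 - t)) * (1 - 2 * (1 - t))) :=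
    mul_le_mul_of_nonneg_left h2 hρ0.le
  have h4 : (1 - t) ^ 2 ≤ ρ ^ 2 / 9 := by nlinarith
  have h5 : ρ ^ 2 ≤ ρ := by nlinarith
  nlinarith [h3, h4, h5]

/-- For `[0,1]`-valued random variables `U, V` with `E[U] ≥ (1 − ρ₁)e^{−2h}` and
`E[V] ≥ (1 − ρ₂)e^{−2h}`, where `ρ = ρ₁ + ρ₂ < 1` and `0 ≤ h < ρ/6`,
we have `E[UV] ≥ (1 − 2ρ)e^{−4h}`. -/
theorem stmt_14 {Ω : Type*} [MeasurableSpace Ω] (μ : Measure Ω) [IsProbabilityMeasure μ]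
    (U V : Ω → ℝ) (hU_meas : Measurable U) (hV_meas : Measurable V)
    (hU : ∀ ω, U ω ∈ Set.Icc (0 : ℝ) 1) (hV : ∀ ω, V ω ∈ Set.Icc (0 : ℝ) 1)
    (ρ₁ ρ₂ : ℝ) (hρ₁ : 0 ≤ ρ₁) (hρ₂ : 0 ≤ ρ₂) (hρ : ρ₁ + ρ₂ < 1)
    (h : ℝ) (hh0 : 0 ≤ h) (hh : h < (ρ₁ + ρ₂) / 6)
    (hEU : (1 - ρ₁) * Real.exp (-2 * h) ≤ ∫ ω, U ω ∂μ)
    (hEV : (1 - ρ₂) * Real.exp (-2 * h) ≤ ∫ ω, V ω ∂μ) :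
    (1 - 2 * (ρ₁ + ρ₂)) * Real.exp (-4 * h) ≤ ∫ ω, U ω * V ω ∂μ := by
  have hUint : Integrable U μ := by
    refine (integrable_const (1 : ℝ)).mono' hU_meas.aestronglyMeasurable ?_
    filter_upwards with ω
    have := hU ω
    rw [Real.norm_eq_abs, abs_le]
    constructor <;> linarith [this.1, this.2]
  have hVint : Integrable V μ := by
    refine (integrable_const (1 : ℝ)).mono' hV_meas.aestronglyMeasurable ?_
    filter_upwards with ω
    have := hV ω
    rw [Real.norm_eq_abs, abs_le]
    constructor <;> linarith [this.1, this.2]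
  have hUVint : Integrable (fun ω => U ω * V ω) μ := by
    refine (integrable_const (1 : ℝ)).mono' (hU_meas.mul hV_meas).aestronglyMeasurable ?_
    filter_upwards with ω
    have h1 := hU ω; have h2 := hV ω
    rw [Real.norm_eq_abs, abs_le]
    constructor
    · nlinarith [h1.1, h2.1]
    · nlinarith [h1.1, h1.2, h2.1, h2.2]
  -- pointwise: U V ≥ U + V - 1
  have hptw : ∀ ω, U ω + V ω - 1 ≤ U ω * V ω := by
    intro ω
    have h1 := hU ω; have h2 := hV ω
    nlinarith [h1.1, h1.2, h2.1, h2.2]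
  have hmono : ∫ ω, (U ω + V ω - 1) ∂μ ≤ ∫ ω, U ω * V ω ∂μ := by
    refine integral_mono ?_ hUVint hptw
    exact (hUint.add hVint).sub (integrable_const 1)
  have hsum : ∫ ω, (U ω + V ω - 1) ∂μ = (∫ ω, U ω ∂μ) + (∫ ω, V ω ∂μ) - 1 := by
    have h1 : ∫ ω, (U ω + V ω - 1) ∂μ = (∫ ω, (U ω + V ω) ∂μ) - ∫ _ω, (1:ℝ) ∂μ :=
      integral_sub (hUint.add hVint) (integrable_const 1)
    rw [h1, integral_add hUint hVint, integral_const]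
    simp
  -- numeric part
  set t := Real.exp (-2 * h) with ht
  have ht1 : t ≤ 1 := Real.exp_le_one_iff.mpr (by linarith)
  have ht2 : 1 - 2 * h ≤ t := by
    have := Real.add_one_le_exp (-2 * h)
    linarith
  have ht0 : 0 < t := Real.exp_pos _
  have hsq : Real.exp (-4 * h) = t * t := by
    rw [ht, ← Real.exp_add]; ring_nf
  rw [hsq]
  have hρpos : 0 < ρ₁ + ρ₂ := by linarith
  have key : (1 - 2 * (ρ₁ + ρ₂)) * (t * t) ≤ (2 - (ρ₁ + ρ₂)) * t - 1 :=
    quad_ineq (ρ₁ + ρ₂) t hρpos hρ ht1 (by linarith)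
  calc (1 - 2 * (ρ₁ + ρ₂)) * (t * t) ≤ (2 - (ρ₁ + ρ₂)) * t - 1 := key
    _ = (1 - ρ₁) * t + (1 - ρ₂) * t - 1 := by ring
    _ ≤ (∫ ω, U ω ∂μ) + (∫ ω, V ω ∂μ) - 1 := by linarith
    _ = ∫ ω, (U ω + V ω - 1) ∂μ := hsum.symm
    _ ≤ _ := hmono
end

section
/- Let a, b, x be real numbers with a ≥ 1, b ≥ e, and x ≥ 9a·log(ab). Then x ≥ a·log(b·x·(x+1)). -/
/-- Elementary inequality used to solve the implicit label-complexity bound: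
if `a ≥ 1`, `b ≥ e` and `x ≥ 9a·log(ab)`, then `x ≥ a·log(b·x·(x+1))`. -/
theorem stmt_19 (a b x : ℝ) (ha : 1 ≤ a) (hb : Real.exp 1 ≤ b)
    (hx : 9 * a * Real.log (a * b) ≤ x) :
    a * Real.log (b * x * (x + 1)) ≤ x := by
  have ha0 : (0:ℝ) < a := lt_of_lt_of_le one_pos ha
  have hb0 : (0:ℝ) < b := lt_of_lt_of_le (Real.exp_pos 1) hb
  have hlogb : 1 ≤ Real.log b := by
    have := Real.log_le_log (Real.exp_pos 1) hb
    rwa [Real.log_exp] at this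
  have hloga : 0 ≤ Real.log a := Real.log_nonneg ha
  have hlogab : Real.log (a * b) = Real.log a + Real.log b :=
    Real.log_mul (ne_of_gt ha0) (ne_of_gt hb0)
  have hab1 : 1 ≤ Real.log (a * b) := by rw [hlogab]; linarith
  have h9a : 9 * a ≤ x := by
    have := mul_le_mul_of_nonneg_left hab1 (le_of_lt ha0)
    linarith
  have hx9 : (9:ℝ) ≤ x := by linarith
  have hx0 : (0:ℝ) < x := by linarith
  have h1 : a * Real.log (a * b) ≤ x / 9 := by linarith
  have halogb : a * Real.log b ≤ x / 9 := by
    have : 0 ≤ a * Real.log a := mul_nonneg (le_of_lt ha0) hloga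
    rw [hlogab] at h1; linarith [mul_add a (Real.log a) (Real.log b)]
  have haloga : a * Real.log a ≤ x / 9 := by
    have : a ≤ a * Real.log b := by
      have := mul_le_mul_of_nonneg_left hlogb (le_of_lt ha0); linarith
    rw [hlogab] at h1; linarith [mul_add a (Real.log a) (Real.log b)]
  -- log v ≤ v / e
  have hlog_div_e : ∀ v : ℝ, 0 < v → Real.log v ≤ v / Real.exp 1 := by
    intro v hv
    have h := Real.log_le_sub_one_of_pos (show 0 < v / Real.exp 1 by positivity)
    rw [Real.log_div (ne_of_gt hv) (ne_of_gt (Real.exp_pos 1)), Real.log_exp] at h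
    linarith
  have hsplit : Real.log (2 * x) ≤ x / (4 * a) / Real.exp 1 + 3 * Real.log 2 + Real.log a := by
    have h2x : (2 * x) = (x / (4 * a)) * (8 * a) := by field_simp; ring
    rw [h2x, Real.log_mul (by positivity) (by positivity)]
    have h8 : Real.log (8 * a) = 3 * Real.log 2 + Real.log a := by
      rw [Real.log_mul (by norm_num) (ne_of_gt ha0),
        show (8:ℝ) = 2 ^ 3 by norm_num, Real.log_pow]
      push_cast; ring
    rw [h8]
    have := hlog_div_e (x / (4 * a)) (by positivity)
    linarith
  -- expand the main log
  have hmain : Real.log (b * x * (x + 1)) = Real.log b + Real.log x + Real.log (x + 1) := by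
    rw [Real.log_mul (by positivity) (by positivity), Real.log_mul (ne_of_gt hb0) (ne_of_gt hx0)]
  have hlx : Real.log x ≤ Real.log (2 * x) := by
    apply Real.log_le_log hx0; linarith
  have hlx1 : Real.log (x + 1) ≤ Real.log (2 * x) := by
    apply Real.log_le_log (by linarith); linarith
  -- numeric bounds
  have hlog2 : Real.log 2 < 0.6931472 := by have := Real.log_two_lt_d9; linarith
  have hlog2' : 0 < Real.log 2 := Real.log_pos (by norm_num)
  have he : (2.7182818:ℝ) < Real.exp 1 := by
    have := Real.exp_one_gt_d9; linarith
  have hxe : x / (2 * Real.exp 1) ≤ x / (2 * 2.7182818) := by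
    apply div_le_div_of_nonneg_left (le_of_lt hx0) (by norm_num) (by linarith)
  have hcancel : 2 * a * (x / (4 * a) / Real.exp 1) = x / (2 * Real.exp 1) := by
    field_simp; ring
  have h2alog : 2 * a * Real.log (2 * x) ≤
      x / (2 * Real.exp 1) + 6 * a * Real.log 2 + 2 * a * Real.log a := by
    have h := mul_le_mul_of_nonneg_left hsplit (by positivity : (0:ℝ) ≤ 2 * a)
    nlinarith [hcancel]
  have ha9 : a ≤ x / 9 := by linarith
  have h6 : 6 * a * Real.log 2 ≤ 6 * (x / 9) * 0.6931472 := by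
    have := mul_le_mul ha9 (le_of_lt hlog2) (le_of_lt hlog2') (by linarith : (0:ℝ) ≤ x / 9)
    linarith
  have hstep : a * Real.log x + a * Real.log (x + 1) ≤ 2 * a * Real.log (2 * x) := by
    have t1 := mul_le_mul_of_nonneg_left hlx (le_of_lt ha0)
    have t2 := mul_le_mul_of_nonneg_left hlx1 (le_of_lt ha0)
    linarith
  calc a * Real.log (b * x * (x + 1))
      = a * Real.log b + a * Real.log x + a * Real.log (x + 1) := by rw [hmain]; ring
    _ ≤ a * Real.log b + 2 * a * Real.log (2 * x) := by linarith
    _ ≤ x / 9 + (x / (2 * Real.exp 1) + 6 * a * Real.log 2 + 2 * a * Real.log a) := by linarith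
    _ ≤ x / 9 + (x / (2 * 2.7182818) + 6 * (x / 9) * 0.6931472 + 2 * (x / 9)) := by linarith
    _ ≤ x := by norm_num; linarith
end
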